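/- arXiv:1609.05943 — 2 statements merged into one kernel-verified Lean document; each statement's English description precedes it below -/
import Mathlib

section
/- Let N ≥ 2 and let α₁,…,α_N be positive reals. For any real vector c = (c₁,…,c_N) with ∑_{i=1}^N α_i c_i = 0 and for any index i₀ ∈ {1,…,N}, one has ∑_{1≤i<j≤N} (c_i − c_j)² ≥ ((∑_{j=1}^N α_j)² / ((N−1)·max_i α_i²)) · c_{i₀}². -/
open Finset

theorem stmt0 (N : ℕ) (hN : 2 ≤ N) (α c : Fin N → ℝ)
    (hα : ∀ i, 0 < α i)
    (hmass : ∑ i, α i * c i = 0) (i₀ : Fin N) :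
    ∑ p ∈ Finset.univ.filter (fun p : Fin N × Fin N => p.1 < p.2),
        (c p.1 - c p.2) ^ 2 ≥
      ((∑ j, α j) ^ 2 /
          (((N : ℝ) - 1) *
            Finset.univ.sup' ⟨⟨0, by omega⟩, Finset.mem_univ _⟩ (fun i => α i ^ 2))) *
        c i₀ ^ 2 := by
  set M : ℝ := Finset.univ.sup' ⟨⟨0, by omega⟩, Finset.mem_univ _⟩ (fun i => α i ^ 2) with hM
  have hMpos : 0 < M := by
    obtain ⟨i, -, hi⟩ := Finset.exists_mem_eq_sup' ⟨⟨0, by omega⟩, Finset.mem_univ _⟩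
      (fun i : Fin N => α i ^ 2)
    rw [hM, hi]
    exact pow_pos (hα i) 2
  have hMle : ∀ i : Fin N, α i ^ 2 ≤ M := fun i =>
    Finset.le_sup' (fun i => α i ^ 2) (Finset.mem_univ i)
  have hNpos : (0:ℝ) < (N:ℝ) - 1 := by
    have : (2:ℝ) ≤ N := by exact_mod_cast hN
    linarith
  set s : Finset (Fin N) := Finset.univ.erase i₀ with hs
  set S : ℝ := ∑ p ∈ Finset.univ.filter (fun p : Fin N × Fin N => p.1 < p.2),
        (c p.1 - c p.2) ^ 2 with hS
  -- Step 1: representation of (∑α) c i₀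
  have h1 : (∑ j, α j) * c i₀ = ∑ j ∈ s, α j * (c i₀ - c j) := by
    have : ∑ j ∈ s, α j * (c i₀ - c j) = ∑ j, α j * (c i₀ - c j) := by
      apply Finset.sum_erase
      ring
    rw [this]
    have : ∑ j, α j * (c i₀ - c j) = (∑ j, α j) * c i₀ - ∑ j, α j * c j := by
      rw [Finset.sum_mul]
      rw [← Finset.sum_sub_distrib]
      congr 1; ext j; ring
    rw [this, hmass]; ring
  -- Step 2: Cauchy-Schwarz
  have h2 : (∑ j ∈ s, α j * (c i₀ - c j)) ^ 2 ≤
      (∑ j ∈ s, α j ^ 2) * ∑ j ∈ s, (c i₀ - c j) ^ 2 :=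
    Finset.sum_mul_sq_le_sq_mul_sq s α (fun j => c i₀ - c j)
  -- Step 3: bound on sum of α²
  have h3 : ∑ j ∈ s, α j ^ 2 ≤ ((N:ℝ) - 1) * M := by
    calc ∑ j ∈ s, α j ^ 2 ≤ ∑ _j ∈ s, M := Finset.sum_le_sum fun j _ => hMle j
    _ = ((N:ℝ) - 1) * M := by
        rw [Finset.sum_const, nsmul_eq_mul]
        congr 1
        rw [hs, Finset.card_erase_of_mem (Finset.mem_univ i₀), Finset.card_univ,
          Fintype.card_fin]
        have : 1 ≤ N := by omega
        push_cast [Nat.cast_sub this]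
        ring
  -- Step 4: sum over erase ≤ S
  have h4 : ∑ j ∈ s, (c i₀ - c j) ^ 2 ≤ S := by
    set φ : Fin N → Fin N × Fin N := fun j => if i₀ < j then (i₀, j) else (j, i₀) with hφ
    have hinj : Set.InjOn φ s := by
      intro j hj k hk hjk
      have hj' : j ≠ i₀ := Finset.ne_of_mem_erase hj
      have hk' : k ≠ i₀ := Finset.ne_of_mem_erase hk
      simp only [hφ] at hjk
      split_ifs at hjk with h₁ h₂ h₂ <;>
        simp only [Prod.mk.injEq] at hjk
      all_goals first
        | exact hjk.2
        | exact hjk.1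
        | exact absurd hjk.1.symm hk'
        | exact absurd hjk.1 hj'
    have heq : ∑ j ∈ s, (c i₀ - c j) ^ 2 = ∑ p ∈ s.image φ, (c p.1 - c p.2) ^ 2 := by
      rw [Finset.sum_image (fun j hj k hk h => hinj hj hk h)]
      apply Finset.sum_congr rfl
      intro j hj
      simp only [hφ]
      split_ifs <;> ring
    rw [heq, hS]
    apply Finset.sum_le_sum_of_subset_of_nonneg
    · intro p hp
      obtain ⟨j, hj, rfl⟩ := Finset.mem_image.mp hp
      have hj' : j ≠ i₀ := Finset.ne_of_mem_erase hj
      simp only [hφ, Finset.mem_filter, Finset.mem_univ, true_and]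
      split_ifs with h
      · exact h
      · exact lt_of_le_of_ne (not_lt.mp h) hj'
    · intro p _ _; positivity
  -- Combine
  rw [ge_iff_le, div_mul_eq_mul_div, div_le_iff₀ (by positivity)]
  have hSnn : 0 ≤ ∑ j ∈ s, (c i₀ - c j) ^ 2 := by positivity
  calc (∑ j, α j) ^ 2 * c i₀ ^ 2 = ((∑ j, α j) * c i₀) ^ 2 := by ring
    _ = (∑ j ∈ s, α j * (c i₀ - c j)) ^ 2 := by rw [h1]
    _ ≤ (∑ j ∈ s, α j ^ 2) * ∑ j ∈ s, (c i₀ - c j) ^ 2 := h2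
    _ ≤ (((N:ℝ) - 1) * M) * ∑ j ∈ s, (c i₀ - c j) ^ 2 := by
        apply mul_le_mul_of_nonneg_right h3 hSnn
    _ ≤ (((N:ℝ) - 1) * M) * S := by
        apply mul_le_mul_of_nonneg_left h4 (by positivity)
    _ = S * (((N:ℝ) - 1) * M) := by ring
end

section
/- Let N ≥ 2 and A = (a_{ij}) a reaction matrix with a_{ij} ≥ 0 for i≠j and columns summing to zero, and let w = (w₁,…,w_N) with all w_i > 0 satisfy A w = 0 (a complex balance equilibrium). Then for any solution c(t) = (u₁,…,u_N) of c' = Ac, the relative entropy E(t) = ∑_i u_i(t)²/w_i satisfies E'(t) = −∑_{i<j} (a_{ij} w_j + a_{ji} w_i)(u_i/w_i − u_j/w_j)² ≤ 0. -/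
/-!
Write `x i = u i / w i`. Expanding `(x i - x j)²`, the sum `∑ i j, A i j * w j * (x i - x j)²`
splits into three pieces: the first vanishes because `A w = 0`, the last because the columns of
`A` sum to zero, and the cross term is `-2 ∑ i, x i * (A u) i`, which is `-E'` along `c' = A c`.
Pairing `(i, j)` with `(j, i)` gives the stated sum over `i < j`, whose terms are nonnegative
since the off-diagonal entries of `A` and the weights `w` are.
-/

open Finset

theorem Finset.sum_filter_lt_add_swap {ι M : Type*} [Fintype ι] [LinearOrder ι]
    [AddCommMonoid M] (f : ι → ι → M) (hdiag : ∀ i, f i i = 0) :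
    ∑ p ∈ univ.filter (fun p : ι × ι => p.1 < p.2), (f p.1 p.2 + f p.2 p.1)
      = ∑ i, ∑ j, f i j := by
  have hswap : ∑ p ∈ univ.filter (fun p : ι × ι => p.1 < p.2), f p.2 p.1
      = ∑ p ∈ univ.filter (fun p : ι × ι => p.2 < p.1), f p.1 p.2 :=
    sum_equiv (Equiv.prodComm ι ι) (by simp) (by simp)
  have hdiag' : ∑ p ∈ univ.filter (fun p : ι × ι => p.2 < p.1), f p.1 p.2
      = ∑ p ∈ univ.filter (fun p : ι × ι => ¬ p.1 < p.2), f p.1 p.2 := by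
    refine sum_subset (fun p => by simpa using le_of_lt) fun p hp hlt => ?_
    simp only [mem_filter, mem_univ, true_and, not_lt] at hp hlt
    rw [le_antisymm hp hlt, hdiag]
  rw [sum_add_distrib, hswap, hdiag', sum_filter_add_sum_filter_not, Fintype.sum_prod_type]

section Dissipation

variable {ι : Type*} [Fintype ι]

theorem hasDerivAt_sum_sq_div (c : ℝ → ι → ℝ) (c' w : ι → ℝ) (t : ℝ)
    (hc : ∀ i, HasDerivAt (fun s => c s i) (c' i) t) :
    HasDerivAt (fun s => ∑ i, c s i ^ 2 / w i) (∑ i, 2 * c t i * c' i / w i) t := by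
  refine HasDerivAt.fun_sum fun i _ => ?_
  simpa using ((hc i).pow 2).div_const (w i)

theorem sum_two_mul_sum_mul_div_eq_neg_sum_sq (A : Matrix ι ι ℝ) (w u : ι → ℝ)
    (hcol : ∀ j, ∑ i, A i j = 0) (heq : ∀ i, ∑ j, A i j * w j = 0) (hw : ∀ i, w i ≠ 0) :
    ∑ i, 2 * u i * (∑ j, A i j * u j) / w i
      = -∑ i, ∑ j, A i j * w j * (u i / w i - u j / w j) ^ 2 := by
  have hexpand : ∀ i j, A i j * w j * (u i / w i - u j / w j) ^ 2
      = A i j * w j * (u i / w i) ^ 2 - 2 * u i * (A i j * u j) / w i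
        + A i j * (u j ^ 2 / w j) := by
    intro i j
    field_simp [hw i, hw j]
    ring
  have hrow : ∑ i, ∑ j, A i j * w j * (u i / w i) ^ 2 = 0 :=
    sum_eq_zero fun i _ => by rw [← sum_mul, heq i, zero_mul]
  have hcolumn : ∑ i, ∑ j, A i j * (u j ^ 2 / w j) = 0 := by
    rw [sum_comm]
    exact sum_eq_zero fun j _ => by rw [← sum_mul, hcol j, zero_mul]
  simp only [hexpand, sum_add_distrib, sum_sub_distrib, hrow, hcolumn, mul_sum, sum_div]
  ring

end Dissipation

theorem stmt10_general (N : ℕ) (A : Matrix (Fin N) (Fin N) ℝ)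
    (hoff : ∀ i j, i ≠ j → 0 ≤ A i j)
    (hcol : ∀ j, A j j = -∑ i ∈ Finset.univ.erase j, A i j)
    (w : Fin N → ℝ) (hw : ∀ i, 0 < w i)
    (heq : ∀ i, ∑ j, A i j * w j = 0)
    (c : ℝ → Fin N → ℝ)
    (hderiv : ∀ t i, HasDerivAt (fun s => c s i) (∑ j, A i j * c t j) t) :
    ∀ t, HasDerivAt (fun s => ∑ i, (c s i) ^ 2 / w i)
        (-(∑ p ∈ Finset.univ.filter (fun p : Fin N × Fin N => p.1 < p.2),
            (A p.1 p.2 * w p.2 + A p.2 p.1 * w p.1) *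
              (c t p.1 / w p.1 - c t p.2 / w p.2) ^ 2)) t
      ∧ -(∑ p ∈ Finset.univ.filter (fun p : Fin N × Fin N => p.1 < p.2),
            (A p.1 p.2 * w p.2 + A p.2 p.1 * w p.1) *
              (c t p.1 / w p.1 - c t p.2 / w p.2) ^ 2) ≤ 0 := by
  intro t
  have hcolsum : ∀ j, ∑ i, A i j = 0 := fun j => by
    rw [← add_sum_erase _ _ (mem_univ j), hcol j, neg_add_cancel]
  have hpairs := sum_filter_lt_add_swap
    (fun i j => A i j * w j * (c t i / w i - c t j / w j) ^ 2) (fun i => by simp)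
  refine ⟨?_, neg_nonpos.2 <| sum_nonneg fun p hp => ?_⟩
  · convert hasDerivAt_sum_sq_div c _ w t (hderiv t) using 1
    rw [sum_two_mul_sum_mul_div_eq_neg_sum_sq A w _ hcolsum heq fun i => (hw i).ne', ← hpairs]
    congr 1
    exact sum_congr rfl fun p _ => by ring
  · have hlt : p.1 < p.2 := (mem_filter.1 hp).2
    have h12 := mul_nonneg (hoff _ _ hlt.ne) (hw p.2).le
    have h21 := mul_nonneg (hoff _ _ hlt.ne') (hw p.1).le
    exact mul_nonneg (add_nonneg h12 h21) (sq_nonneg _)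

theorem stmt10 (N : ℕ) (hN : 2 ≤ N) (A : Matrix (Fin N) (Fin N) ℝ)
    (hoff : ∀ i j, i ≠ j → 0 ≤ A i j)
    (hcol : ∀ j, A j j = -∑ i ∈ Finset.univ.erase j, A i j)
    (w : Fin N → ℝ) (hw : ∀ i, 0 < w i)
    (heq : ∀ i, ∑ j, A i j * w j = 0)
    (c : ℝ → Fin N → ℝ)
    (hderiv : ∀ t i, HasDerivAt (fun s => c s i) (∑ j, A i j * c t j) t) :
    ∀ t, HasDerivAt (fun s => ∑ i, (c s i) ^ 2 / w i)
        (-(∑ p ∈ Finset.univ.filter (fun p : Fin N × Fin N => p.1 < p.2),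
            (A p.1 p.2 * w p.2 + A p.2 p.1 * w p.1) *
              (c t p.1 / w p.1 - c t p.2 / w p.2) ^ 2)) t
      ∧ -(∑ p ∈ Finset.univ.filter (fun p : Fin N × Fin N => p.1 < p.2),
            (A p.1 p.2 * w p.2 + A p.2 p.1 * w p.1) *
              (c t p.1 / w p.1 - c t p.2 / w p.2) ^ 2) ≤ 0 :=
  stmt10_general N A hoff hcol w hw heq c hderiv
end
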